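/- Let Λ be the Dirichlet-to-Neumann map of the lattice Kirchhoff matrix K with positive conductivities γ1,…,γ12 and interior block C. Then the (1,5) entry of Λ satisfies Λ(1,5) = -( γ1·γ2·γ11·γ6·(γ8+γ4+γ9+γ5) + γ1·γ8·γ5·γ6·(γ2+γ3+γ10+γ11) ) / det C. -/

import Mathlib

open Matrix

/-- The endpoints of the 12 edges of the lattice network (0-based: vertex `v` of the
paper is `v - 1`, edge conductivity `γₖ` of the paper is `γ (k-1)`).  The edges are
{1,9}γ₁, {9,12}γ₂, {6,12}γ₃, {2,10}γ₄, {10,11}γ₅, {5,11}γ₆, {8,9}γ₇, {9,10}γ₈,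
{3,10}γ₉, {7,12}γ₁₀, {11,12}γ₁₁, {4,11}γ₁₂. -/
def edgeEnds : Fin 12 → Fin 12 × Fin 12 :=
  ![(0, 8), (8, 11), (5, 11), (1, 9), (9, 10), (4, 10),
    (7, 8), (8, 9), (2, 9), (6, 11), (10, 11), (3, 10)]

/-- The conductivity between vertices `i` and `j`: `γ e` if some edge `e` joins `i`
and `j`, and `0` otherwise. -/
def condWt (γ : Fin 12 → ℝ) (i j : Fin 12) : ℝ :=
  ∑ e : Fin 12, if edgeEnds e = (i, j) ∨ edgeEnds e = (j, i) then γ e else 0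

/-- The Kirchhoff matrix of the lattice network: `K i j = -γᵢⱼ` off the diagonal and
`K i i = ∑ⱼ γᵢⱼ` on the diagonal. -/
def kirchhoff (γ : Fin 12 → ℝ) : Matrix (Fin 12) (Fin 12) ℝ :=
  Matrix.of fun i j => if i = j then ∑ k : Fin 12, condWt γ i k else -condWt γ i j

/-- The boundary vertices (paper's vertices 1–8) as indices of `Fin 12`. -/
def bdV : Fin 8 → Fin 12 := Fin.castLE (by norm_num)

/-- The interior vertices (paper's vertices 9–12) as indices of `Fin 12`. -/
def intV : Fin 4 → Fin 12 := fun i => i.addNat 8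

/-- The boundary-boundary block `A` of the Kirchhoff matrix. -/
def blockA (γ : Fin 12 → ℝ) : Matrix (Fin 8) (Fin 8) ℝ := (kirchhoff γ).submatrix bdV bdV

/-- The boundary-interior block `B` of the Kirchhoff matrix. -/
def blockB (γ : Fin 12 → ℝ) : Matrix (Fin 8) (Fin 4) ℝ := (kirchhoff γ).submatrix bdV intV

/-- The interior-interior block `C` of the Kirchhoff matrix. -/
def blockC (γ : Fin 12 → ℝ) : Matrix (Fin 4) (Fin 4) ℝ := (kirchhoff γ).submatrix intV intV

/-- The Dirichlet-to-Neumann map `Λ = A - B C⁻¹ Bᵀ` of the lattice network. -/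
noncomputable def dtn (γ : Fin 12 → ℝ) : Matrix (Fin 8) (Fin 8) ℝ :=
  blockA γ - blockB γ * (blockC γ)⁻¹ * (blockB γ)ᵀ

/-!
Boundary vertex 1 is joined only to interior vertex 9 (by `γ₁`), boundary vertex 5 only to
interior vertex 11 (by `γ₆`), and `A(1,5) = 0`, so `Λ(1,5) = -γ₁ γ₆ (C⁻¹)(9,11)`. By Cramer's rule
`(C⁻¹)(9,11)` is a cofactor of `C` over `det C`, and that `3 × 3` minor expands to
`γ₂γ₁₁(γ₄+γ₅+γ₈+γ₉) + γ₅γ₈(γ₂+γ₃+γ₁₀+γ₁₁)`. Finally `det C ≠ 0` because `C` is strictly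
diagonally dominant: every interior vertex has an edge to the boundary.
-/

theorem Matrix.sub_mul_mul_transpose_apply_of_row_eq_single {m n R : Type*} [Fintype n]
    [DecidableEq n] [CommRing R] (A : Matrix m m R) (B : Matrix m n R) (M : Matrix n n R)
    {i j : m} {k l : n} {b c : R} (hi : B i = Pi.single k b) (hj : B j = Pi.single l c) :
    (A - B * M * Bᵀ) i j = A i j - b * M k l * c := by
  simp [mul_apply, hi, hj, Pi.single_apply]

theorem Matrix.inv_apply_eq_adjugate_div {n K : Type*} [Fintype n] [DecidableEq n] [Field K]
    (M : Matrix n n K) (i j : n) : M⁻¹ i j = M.adjugate i j / M.det := by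
  simp [inv_def, Ring.inverse_eq_inv', div_eq_inv_mul]

theorem Matrix.det_ne_zero_of_offDiag_nonpos_of_sum_row_pos {n : Type*} [Fintype n]
    [DecidableEq n] {M : Matrix n n ℝ} (hoff : ∀ i j, i ≠ j → M i j ≤ 0)
    (hrow : ∀ i, 0 < ∑ j, M i j) : M.det ≠ 0 := by
  refine det_ne_zero_of_sum_row_lt_diag fun i => ?_
  have hnorm : ∑ j ∈ Finset.univ.erase i, ‖M i j‖ = -∑ j ∈ Finset.univ.erase i, M i j := by
    rw [← Finset.sum_neg_distrib]
    exact Finset.sum_congr rfl fun j hj =>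
      Real.norm_of_nonpos (hoff i j (Finset.ne_of_mem_erase hj).symm)
  have hsplit := Finset.add_sum_erase Finset.univ (M i) (Finset.mem_univ i)
  have hnonpos : ∑ j ∈ Finset.univ.erase i, M i j ≤ 0 :=
    Finset.sum_nonpos fun j hj => hoff i j (Finset.ne_of_mem_erase hj).symm
  have hdiag : 0 < M i i := by linarith [hrow i]
  rw [hnorm, Real.norm_of_nonneg hdiag.le]
  linarith [hrow i]

lemma Fin.sum_univ_twelve {M : Type*} [AddCommMonoid M] (f : Fin 12 → M) :
    ∑ i, f i = f 0 + f 1 + f 2 + f 3 + f 4 + f 5 + f 6 + f 7 + f 8 + f 9 + f 10 + f 11 := by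
  simp [Fin.sum_univ_succ, add_assoc]

lemma card_filter_edgeEnds (e i : Fin 12) :
    (Finset.univ.filter fun k => edgeEnds e = (i, k) ∨ edgeEnds e = (k, i)).card =
      if (edgeEnds e).1 = i ∨ (edgeEnds e).2 = i then 1 else 0 := by
  revert e i
  decide

lemma kirchhoff_apply_self (γ : Fin 12 → ℝ) (i : Fin 12) :
    kirchhoff γ i i = ∑ e, if (edgeEnds e).1 = i ∨ (edgeEnds e).2 = i then γ e else 0 := by
  rw [kirchhoff, of_apply, if_pos rfl]
  unfold condWt
  rw [Finset.sum_comm]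
  refine Finset.sum_congr rfl fun e _ => ?_
  rw [Finset.sum_ite, Finset.sum_const_zero, add_zero, Finset.sum_const, card_filter_edgeEnds]
  split_ifs <;> simp

lemma kirchhoff_apply_of_ne (γ : Fin 12 → ℝ) {i j : Fin 12} (h : i ≠ j) :
    kirchhoff γ i j = -condWt γ i j := by
  rw [kirchhoff, of_apply, if_neg h]

lemma blockA_zero_four (γ : Fin 12 → ℝ) : blockA γ 0 4 = 0 := by
  simp [blockA, bdV, kirchhoff_apply_of_ne, condWt, Fin.sum_univ_twelve, edgeEnds]

lemma blockB_zero (γ : Fin 12 → ℝ) : blockB γ 0 = Pi.single 0 (-γ 0) := by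
  ext k
  fin_cases k <;>
    simp [blockB, bdV, intV, kirchhoff_apply_of_ne, condWt, Fin.sum_univ_twelve, edgeEnds]

lemma blockB_four (γ : Fin 12 → ℝ) : blockB γ 4 = Pi.single 2 (-γ 5) := by
  ext k
  fin_cases k <;>
    simp [blockB, bdV, intV, kirchhoff_apply_of_ne, condWt, Fin.sum_univ_twelve, edgeEnds]

lemma blockC_eq (γ : Fin 12 → ℝ) :
    blockC γ = !![γ 0 + γ 1 + γ 6 + γ 7, -γ 7, 0, -γ 1;
                  -γ 7, γ 3 + γ 4 + γ 7 + γ 8, -γ 4, 0;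
                  0, -γ 4, γ 4 + γ 5 + γ 10 + γ 11, -γ 10;
                  -γ 1, 0, -γ 10, γ 1 + γ 2 + γ 9 + γ 10] := by
  ext i j
  fin_cases i <;> fin_cases j <;>
    simp [blockC, intV, kirchhoff_apply_self, kirchhoff_apply_of_ne, condWt, Fin.sum_univ_twelve,
      edgeEnds]

lemma det_blockC_ne_zero (γ : Fin 12 → ℝ) (hγ : ∀ e, 0 < γ e) : (blockC γ).det ≠ 0 := by
  refine det_ne_zero_of_offDiag_nonpos_of_sum_row_pos (fun i j hij => ?_) (fun i => ?_)
  · have := hγ 1; have := hγ 4; have := hγ 7; have := hγ 10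
    rw [blockC_eq]
    fin_cases i <;> fin_cases j <;> simp at hij ⊢ <;> linarith
  · have := hγ 0; have := hγ 2; have := hγ 3; have := hγ 5
    have := hγ 6; have := hγ 8; have := hγ 9; have := hγ 11
    rw [blockC_eq, Fin.sum_univ_four]
    fin_cases i <;> simp <;> linarith

lemma adjugate_blockC_zero_two (γ : Fin 12 → ℝ) :
    (blockC γ).adjugate 0 2 =
      γ 1 * γ 10 * (γ 3 + γ 4 + γ 7 + γ 8) + γ 4 * γ 7 * (γ 1 + γ 2 + γ 9 + γ 10) := by
  rw [blockC_eq, adjugate_fin_succ_eq_det_submatrix, det_fin_three]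
  simp only [Fin.succAbove, Fin.isValue, Fin.coe_ofNat_eq_mod, Nat.reduceAdd, Nat.zero_mod,
    add_zero, submatrix_apply, Fin.castSucc_zero, Fin.castSucc_one, Fin.reduceCastSucc,
    Fin.reduceLT, lt_self_iff_false, ↓reduceIte, Fin.succ_zero_eq_one, Fin.succ_one_eq_two,
    Fin.reduceSucc, of_apply, cons_val', cons_val_zero, cons_val_one, cons_val, cons_val_fin_one]
  ring

/-- the (1,5) entry of `Λ` (0-based: `Λ 0 4`) equals
`-(γ₁γ₂γ₁₁γ₆(γ₈+γ₄+γ₉+γ₅) + γ₁γ₈γ₅γ₆(γ₂+γ₃+γ₁₀+γ₁₁)) / det C`. -/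
theorem dtn_entry_1_5 (γ : Fin 12 → ℝ) (hγ : ∀ e, 0 < γ e) :
    dtn γ 0 4 =
      -(γ 0 * γ 1 * γ 10 * γ 5 * (γ 7 + γ 3 + γ 8 + γ 4) +
        γ 0 * γ 7 * γ 4 * γ 5 * (γ 1 + γ 2 + γ 9 + γ 10)) / (blockC γ).det := by
  rw [dtn, sub_mul_mul_transpose_apply_of_row_eq_single _ _ _ (blockB_zero γ) (blockB_four γ),
    blockA_zero_four, inv_apply_eq_adjugate_div, adjugate_blockC_zero_two]
  field_simp [det_blockC_ne_zero γ hγ]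
  ring
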